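/- arXiv:2010.01599 — 4 statements merged into one kernel-verified Lean document; each statement's English description precedes it below -/
import Mathlib

section
/- Let $s,t \in \mathbb{R}_{\ge 0}^4$ and $u \in \mathbb{C}^4$. Suppose $\sqrt{s_2 t_2}+\sqrt{s_3 t_3} \ge |u_2|+|u_3|$ (inequality $W_1[2,3]$), and the inequality $W_{4a}[1,3]$: $\sqrt{s_1 t_1}+\sqrt{s_3 t_3}+2\min\{\sqrt{s_2 t_2},\sqrt{s_4 t_4}\} \ge |u_1|+|u_3|$. Then $\sqrt{s_1 t_1}+\sqrt{s_2 t_2}+2(\sqrt{s_3 t_3}+\sqrt{s_4 t_4}) \ge |u_1|+|u_2|+2|u_3|$. -/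
/-- Indices are 0-based: `s 1` is the paper's $s_2$. -/
theorem stmt_5_general (s t : Fin 4 → ℝ)
    (u : Fin 4 → ℂ)
    (h23 : Real.sqrt (s 1 * t 1) + Real.sqrt (s 2 * t 2) ≥
      ‖u 1‖ + ‖u 2‖)
    (h4a : Real.sqrt (s 0 * t 0) + Real.sqrt (s 2 * t 2) +
        2 * min (Real.sqrt (s 1 * t 1)) (Real.sqrt (s 3 * t 3)) ≥
      ‖u 0‖ + ‖u 2‖) :
    Real.sqrt (s 0 * t 0) + Real.sqrt (s 1 * t 1) +
        2 * (Real.sqrt (s 2 * t 2) + Real.sqrt (s 3 * t 3)) ≥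
      ‖u 0‖ + ‖u 1‖ + 2 * ‖u 2‖ := by
  -- The claim is the sum of the two hypotheses, after bounding the minimum by its second argument.
  have hmin := min_le_right (Real.sqrt (s 1 * t 1)) (Real.sqrt (s 3 * t 3))
  linarith

/-- W₁[2,3] and W₄ₐ[1,3] imply a component of W₄ᵦ[1,2]. 0-based indices. -/
theorem stmt_5 (s t : Fin 4 → ℝ) (hs : ∀ i, 0 ≤ s i) (ht : ∀ i, 0 ≤ t i)
    (u : Fin 4 → ℂ)
    (h23 : Real.sqrt (s 1 * t 1) + Real.sqrt (s 2 * t 2) ≥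
      ‖u 1‖ + ‖u 2‖)
    (h4a : Real.sqrt (s 0 * t 0) + Real.sqrt (s 2 * t 2) +
        2 * min (Real.sqrt (s 1 * t 1)) (Real.sqrt (s 3 * t 3)) ≥
      ‖u 0‖ + ‖u 2‖) :
    Real.sqrt (s 0 * t 0) + Real.sqrt (s 1 * t 1) +
        2 * (Real.sqrt (s 2 * t 2) + Real.sqrt (s 3 * t 3)) ≥
      ‖u 0‖ + ‖u 1‖ + 2 * ‖u 2‖ :=
  stmt_5_general s t u h23 h4a
end

section
/- Let $a,b \in \mathbb{R}_{\ge 0}^4$, $z \in \mathbb{C}^4$ and $s,t \in \mathbb{R}_{\ge 0}^4$, $u \in \mathbb{C}^4$. Assume: $|z_4| \ge |z_3| \ge \sqrt{a_1 b_1}$; the inequalities $S_4[1,i|3,4]$ for $i=2,3,4$, i.e. $\min\{\sqrt{a_1b_1}+\sqrt{a_ib_i}, \sqrt{a_kb_k}+\sqrt{a_\ell b_\ell}\} \ge \max\{|z_1|+|z_i|, |z_3|+|z_4|\}$ where $\{k,\ell\}$ is the complement of $\{1,i\}$; $S_1[1,2]$: $\min\{\sqrt{a_1b_1},\sqrt{a_2b_2}\}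 \ge \max\{|z_1|,|z_2|\}$; $W_2[4,1]$: $\sqrt{s_2t_2}+\sqrt{s_3t_3}+\sqrt{s_4t_4} \ge |u_4|$; $W_2[3,1]$: $\sqrt{s_2t_2}+\sqrt{s_3t_3}+\sqrt{s_4t_4} \ge |u_3|$; and $W_3$: $\sum_{i=1}^4\sqrt{s_it_i} \ge \sum_{i=1}^4|u_i|$. Then $\sum_{i=1}^4 \left(\sqrt{s_i t_i}\sqrt{a_i b_i} - |u_i||z_i|\right) \ge 0$. -/
/-!
Write `p i = √(s i t i)`, `q i = √(a i b i)`, `v i = ‖u i‖`, `w i = ‖z i‖` and `P = p 1 + p 2 + p 3`.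
The weights `w 0, w 1` are at most `q 0`, so the mass `v 0 + v 1 ≤ ∑ p - v 2 - v 3` costs at most
`q 0` per unit. The excesses `w 2 - q 0, w 3 - q 0` are nonnegative and carry masses `v 2, v 3 ≤ P`,
so they cost at most `P (w 2 + w 3 - 2 q 0)`, and `w 2 + w 3 - q 0 ≤ q i` for `i ≠ 0` bounds this
by `∑_{i ≠ 0} p i (q i - q 0)`.
-/

theorem sum_mul_le_sum_mul_of_case_one (p q v w : Fin 4 → ℝ) (hp : ∀ i, 0 ≤ p i)
    (hv : ∀ i, 0 ≤ v i) (hq0 : 0 ≤ q 0) (hw0 : w 0 ≤ q 0) (hw1 : w 1 ≤ q 0)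
    (hw2 : q 0 ≤ w 2) (hw3 : q 0 ≤ w 3) (hq1 : w 2 + w 3 ≤ q 0 + q 1)
    (hq2 : w 2 + w 3 ≤ q 0 + q 2) (hq3 : w 2 + w 3 ≤ q 0 + q 3)
    (hv2 : v 2 ≤ p 1 + p 2 + p 3) (hv3 : v 3 ≤ p 1 + p 2 + p 3)
    (hsum : ∑ i, v i ≤ ∑ i, p i) :
    ∑ i, v i * w i ≤ ∑ i, p i * q i := by
  simp only [Fin.sum_univ_four] at hsum ⊢
  set P := p 1 + p 2 + p 3
  have hv01 : v 0 + v 1 ≤ p 0 + P - v 2 - v 3 := by linarith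
  calc v 0 * w 0 + v 1 * w 1 + v 2 * w 2 + v 3 * w 3
      ≤ (v 0 + v 1) * q 0 + v 2 * w 2 + v 3 * w 3 := by
        linarith [mul_le_mul_of_nonneg_left hw0 (hv 0), mul_le_mul_of_nonneg_left hw1 (hv 1)]
    _ ≤ (p 0 + P - v 2 - v 3) * q 0 + v 2 * w 2 + v 3 * w 3 := by
        gcongr
    _ = (p 0 + P) * q 0 + v 2 * (w 2 - q 0) + v 3 * (w 3 - q 0) := by ring
    _ ≤ (p 0 + P) * q 0 + P * (w 2 - q 0) + P * (w 3 - q 0) := by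
        gcongr
    _ = p 0 * q 0 + p 1 * (w 2 + w 3 - q 0) + p 2 * (w 2 + w 3 - q 0)
          + p 3 * (w 2 + w 3 - q 0) := by ring
    _ ≤ p 0 * q 0 + p 1 * q 1 + p 2 * q 2 + p 3 * q 3 := by
        gcongr <;> linarith [hp 1, hp 2, hp 3]

theorem stmt_9_general (a b s t : Fin 4 → ℝ) (z u : Fin 4 → ℂ)
    (hz43 : ‖z 3‖ ≥ ‖z 2‖)
    (hz31 : ‖z 2‖ ≥ Real.sqrt (a 0 * b 0))
    (hS4_12 : min (Real.sqrt (a 0 * b 0) + Real.sqrt (a 1 * b 1))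
        (Real.sqrt (a 2 * b 2) + Real.sqrt (a 3 * b 3)) ≥
      max (‖z 0‖ + ‖z 1‖)
        (‖z 2‖ + ‖z 3‖))
    (hS4_13 : min (Real.sqrt (a 0 * b 0) + Real.sqrt (a 2 * b 2))
        (Real.sqrt (a 2 * b 2) + Real.sqrt (a 3 * b 3)) ≥
      max (‖z 0‖ + ‖z 2‖)
        (‖z 2‖ + ‖z 3‖))
    (hS4_14 : min (Real.sqrt (a 0 * b 0) + Real.sqrt (a 3 * b 3))
        (Real.sqrt (a 2 * b 2) + Real.sqrt (a 3 * b 3)) ≥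
      max (‖z 0‖ + ‖z 3‖)
        (‖z 2‖ + ‖z 3‖))
    (hS112 : min (Real.sqrt (a 0 * b 0)) (Real.sqrt (a 1 * b 1)) ≥
      max (‖z 0‖) (‖z 1‖))
    (hW241 : Real.sqrt (s 1 * t 1) + Real.sqrt (s 2 * t 2) + Real.sqrt (s 3 * t 3) ≥
      ‖u 3‖)
    (hW231 : Real.sqrt (s 1 * t 1) + Real.sqrt (s 2 * t 2) + Real.sqrt (s 3 * t 3) ≥
      ‖u 2‖)
    (hW3 : ∑ i, Real.sqrt (s i * t i) ≥ ∑ i, ‖u i‖) :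
    ∑ i, (Real.sqrt (s i * t i) * Real.sqrt (a i * b i) -
      ‖u i‖ * ‖z i‖) ≥ 0 := by
  simp only [ge_iff_le, le_min_iff, max_le_iff] at hS4_12 hS4_13 hS4_14 hS112
  rw [ge_iff_le, Finset.sum_sub_distrib, sub_nonneg]
  exact sum_mul_le_sum_mul_of_case_one (fun i ↦ √(s i * t i)) (fun i ↦ √(a i * b i))
    (fun i ↦ ‖u i‖) (fun i ↦ ‖z i‖) (fun _ ↦ Real.sqrt_nonneg _) (fun _ ↦ norm_nonneg _)
    (Real.sqrt_nonneg _) hS112.1.1 hS112.1.2 hz31 (hz31.trans hz43) hS4_12.1.2 hS4_13.1.2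
    hS4_14.1.2 hW231 hW241 hW3

/-- Case I estimate in the proof of Theorem 3.1. 0-based indices. -/
theorem stmt_9 (a b s t : Fin 4 → ℝ) (ha : ∀ i, 0 ≤ a i) (hb : ∀ i, 0 ≤ b i)
    (hs : ∀ i, 0 ≤ s i) (ht : ∀ i, 0 ≤ t i) (z u : Fin 4 → ℂ)
    (hz43 : ‖z 3‖ ≥ ‖z 2‖)
    (hz31 : ‖z 2‖ ≥ Real.sqrt (a 0 * b 0))
    (hS4_12 : min (Real.sqrt (a 0 * b 0) + Real.sqrt (a 1 * b 1))
        (Real.sqrt (a 2 * b 2) + Real.sqrt (a 3 * b 3)) ≥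
      max (‖z 0‖ + ‖z 1‖)
        (‖z 2‖ + ‖z 3‖))
    (hS4_13 : min (Real.sqrt (a 0 * b 0) + Real.sqrt (a 2 * b 2))
        (Real.sqrt (a 2 * b 2) + Real.sqrt (a 3 * b 3)) ≥
      max (‖z 0‖ + ‖z 2‖)
        (‖z 2‖ + ‖z 3‖))
    (hS4_14 : min (Real.sqrt (a 0 * b 0) + Real.sqrt (a 3 * b 3))
        (Real.sqrt (a 2 * b 2) + Real.sqrt (a 3 * b 3)) ≥
      max (‖z 0‖ + ‖z 3‖)
        (‖z 2‖ + ‖z 3‖))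
    (hS112 : min (Real.sqrt (a 0 * b 0)) (Real.sqrt (a 1 * b 1)) ≥
      max (‖z 0‖) (‖z 1‖))
    (hW241 : Real.sqrt (s 1 * t 1) + Real.sqrt (s 2 * t 2) + Real.sqrt (s 3 * t 3) ≥
      ‖u 3‖)
    (hW231 : Real.sqrt (s 1 * t 1) + Real.sqrt (s 2 * t 2) + Real.sqrt (s 3 * t 3) ≥
      ‖u 2‖)
    (hW3 : ∑ i, Real.sqrt (s i * t i) ≥ ∑ i, ‖u i‖) :
    ∑ i, (Real.sqrt (s i * t i) * Real.sqrt (a i * b i) -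
      ‖u i‖ * ‖z i‖) ≥ 0 :=
  stmt_9_general a b s t z u hz43 hz31 hS4_12 hS4_13 hS4_14 hS112 hW241 hW231 hW3
end

section
/- Let $a,b \in \mathbb{R}_{\ge 0}^4$, $z \in \mathbb{C}^4$ and $s,t \in \mathbb{R}_{\ge 0}^4$, $u \in \mathbb{C}^4$. Assume: $|z_4| \ge \sqrt{a_1b_1}$ and $|z_4| \ge \sqrt{a_2b_2}$; $\sqrt{a_1b_1}+\sqrt{a_2b_2} - |z_4| \ge \max\{|z_1|,|z_2|,|z_3|\}$; $S_1[3,4]$: $\min\{\sqrt{a_3b_3},\sqrt{a_4b_4}\} \ge |z_4|$; $W_3$: $\sum_{i=1}^4\sqrt{s_it_i} \ge \sum_{i=1}^4|u_i|$; $W_2[4,1]$: $\sqrt{s_2t_2}+\sqrt{s_3t_3}+\sqrt{s_4t_4} \ge |u_4|$; and $W_2[4,2]$: $\sqrt{s_1t_1}+\sqrt{s_3t_3}+\sqrt{s_4t_4} \ge |u_4|$. Then $\sum_{i=1}^4 \left(\sqrt{s_it_i}\sqrt{a_ib_i} - |u_i||z_i|\right) \ge 0$. -/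
/-!
With `M = A₀ + A₁ - Z₃`, the hypothesis on the maximum bounds `Z₀, Z₁, Z₂` by `M`, and the
witness condition `∑ Qᵢ ≤ ∑ Pᵢ` then gives `∑ Qᵢ Zᵢ ≤ M (∑ Pᵢ - Q₃) + Q₃ Z₃`. What remains,
`Q₃ ((Z₃ - A₀) + (Z₃ - A₁)) ≤ ∑ Pᵢ (Aᵢ - M)`, splits into the two conditions bounding `Q₃`,
each multiplied by one of the nonnegative gaps `Z₃ - A₀` and `Z₃ - A₁`, together with
`Z₃ ≤ A₂` and `Z₃ ≤ A₃`.
-/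

theorem sum_mul_sub_mul_nonneg (A P Z Q : Fin 4 → ℝ)
    (hP : ∀ i, 0 ≤ P i) (hQ : ∀ i, 0 ≤ Q i) (hZ₀ : 0 ≤ Z 0)
    (hA₀ : Z 3 ≥ A 0) (hA₁ : Z 3 ≥ A 1)
    (hmax : A 0 + A 1 - Z 3 ≥ max (Z 0) (max (Z 1) (Z 2)))
    (hA₂₃ : min (A 2) (A 3) ≥ Z 3)
    (hPQ : ∑ i, P i ≥ ∑ i, Q i)
    (hQ₃₀ : P 1 + P 2 + P 3 ≥ Q 3) (hQ₃₁ : P 0 + P 2 + P 3 ≥ Q 3) :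
    ∑ i, (P i * A i - Q i * Z i) ≥ 0 := by
  simp only [Fin.sum_univ_four] at hPQ ⊢
  simp only [ge_iff_le, max_le_iff] at hmax
  obtain ⟨hZ₀M, hZ₁M, hZ₂M⟩ := hmax
  obtain ⟨hA₂, hA₃⟩ := le_min_iff.mp hA₂₃
  set M := A 0 + A 1 - Z 3
  have hM : 0 ≤ M := hZ₀.trans hZ₀M
  have norms_le : Q 0 * Z 0 + Q 1 * Z 1 + Q 2 * Z 2 ≤ M * (Q 0 + Q 1 + Q 2) := by
    have := mul_le_mul_of_nonneg_left hZ₀M (hQ 0)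
    have := mul_le_mul_of_nonneg_left hZ₁M (hQ 1)
    have := mul_le_mul_of_nonneg_left hZ₂M (hQ 2)
    linarith
  have witness_le : M * (Q 0 + Q 1 + Q 2) ≤ M * (P 0 + P 1 + P 2 + P 3 - Q 3) :=
    mul_le_mul_of_nonneg_left (by linarith) hM
  have gap₀ : Q 3 * (Z 3 - A 0) ≤ (P 1 + P 2 + P 3) * (Z 3 - A 0) :=
    mul_le_mul_of_nonneg_right hQ₃₀ (sub_nonneg.2 hA₀)
  have gap₁ : Q 3 * (Z 3 - A 1) ≤ (P 0 + P 2 + P 3) * (Z 3 - A 1) :=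
    mul_le_mul_of_nonneg_right hQ₃₁ (sub_nonneg.2 hA₁)
  have hA₂' := mul_le_mul_of_nonneg_left hA₂ (hP 2)
  have hA₃' := mul_le_mul_of_nonneg_left hA₃ (hP 3)
  linarith

theorem stmt_10_general (a b s t : Fin 4 → ℝ) (z u : Fin 4 → ℂ)
    (hz41 : ‖z 3‖ ≥ Real.sqrt (a 0 * b 0))
    (hz42 : ‖z 3‖ ≥ Real.sqrt (a 1 * b 1))
    (hmax : Real.sqrt (a 0 * b 0) + Real.sqrt (a 1 * b 1) - ‖z 3‖ ≥
      max (‖z 0‖) (max (‖z 1‖) (‖z 2‖)))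
    (hS134 : min (Real.sqrt (a 2 * b 2)) (Real.sqrt (a 3 * b 3)) ≥ ‖z 3‖)
    (hW3 : ∑ i, Real.sqrt (s i * t i) ≥ ∑ i, ‖u i‖)
    (hW241 : Real.sqrt (s 1 * t 1) + Real.sqrt (s 2 * t 2) + Real.sqrt (s 3 * t 3) ≥
      ‖u 3‖)
    (hW242 : Real.sqrt (s 0 * t 0) + Real.sqrt (s 2 * t 2) + Real.sqrt (s 3 * t 3) ≥
      ‖u 3‖) :
    ∑ i, (Real.sqrt (s i * t i) * Real.sqrt (a i * b i) -
      ‖u i‖ * ‖z i‖) ≥ 0 :=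
  sum_mul_sub_mul_nonneg (fun i ↦ √(a i * b i)) (fun i ↦ √(s i * t i)) (fun i ↦ ‖z i‖)
    (fun i ↦ ‖u i‖) (fun _ ↦ Real.sqrt_nonneg _) (fun _ ↦ norm_nonneg _) (norm_nonneg _)
    hz41 hz42 hmax hS134 hW3 hW241 hW242

/-- Second case estimate in the proof of Theorem 3.1. 0-based indices. -/
theorem stmt_10 (a b s t : Fin 4 → ℝ) (ha : ∀ i, 0 ≤ a i) (hb : ∀ i, 0 ≤ b i)
    (hs : ∀ i, 0 ≤ s i) (ht : ∀ i, 0 ≤ t i) (z u : Fin 4 → ℂ)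
    (hz41 : ‖z 3‖ ≥ Real.sqrt (a 0 * b 0))
    (hz42 : ‖z 3‖ ≥ Real.sqrt (a 1 * b 1))
    (hmax : Real.sqrt (a 0 * b 0) + Real.sqrt (a 1 * b 1) - ‖z 3‖ ≥
      max (‖z 0‖) (max (‖z 1‖) (‖z 2‖)))
    (hS134 : min (Real.sqrt (a 2 * b 2)) (Real.sqrt (a 3 * b 3)) ≥ ‖z 3‖)
    (hW3 : ∑ i, Real.sqrt (s i * t i) ≥ ∑ i, ‖u i‖)
    (hW241 : Real.sqrt (s 1 * t 1) + Real.sqrt (s 2 * t 2) + Real.sqrt (s 3 * t 3) ≥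
      ‖u 3‖)
    (hW242 : Real.sqrt (s 0 * t 0) + Real.sqrt (s 2 * t 2) + Real.sqrt (s 3 * t 3) ≥
      ‖u 3‖) :
    ∑ i, (Real.sqrt (s i * t i) * Real.sqrt (a i * b i) -
      ‖u i‖ * ‖z i‖) ≥ 0 :=
  stmt_10_general a b s t z u hz41 hz42 hmax hS134 hW3 hW241 hW242
end

section
/- Let $\mu_1,\mu_2,\mu_3 \ge 0$ with $\mu_2 \le \mu_3 \le \mu_1+\mu_2$, and let $p_1,p_2,p_3,p_4,q_1,q_2,q_3,q_4 \ge 0$ and $c \ge \mu_3$ satisfy: $\sum_i p_i \ge \sum_i q_i$; $p_2+p_3+p_4 \ge q_4$; $p_2+p_3 \ge q_2+q_3$; $p_1+p_4 \ge q_1+q_4$; and $2p_2+p_3+p_4 \ge q_3+q_4$. Then $\left(\sum_i p_i - \sum_i q_i\right)c + (p_2+p_3+p_4-q_4)\mu_1 + (-p_2+q_3)\mu_2 + (-p_3+q_2)\mu_3 \ge 0$. -/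
/-!
Replacing `c` by `m3` costs `(Σ p - Σ q) * (c - m3) ≥ 0`. What remains is a linear form in
`(m1, m2, m3)`, nonnegative on the cone `0 ≤ m2 ≤ m3 ≤ m1 + m2` because it is nonnegative on the
three rays spanning that cone.
-/

/-- The cone `0 ≤ y ≤ z ≤ x + y` is spanned by `(1, 0, 0)`, `(1, 0, 1)` and `(0, 1, 1)`. -/
theorem mul_add_mul_add_mul_nonneg_of_le_of_le_add {R : Type*} [CommRing R] [PartialOrder R]
    [IsOrderedRing R] {x y z α β γ : R} (hy : 0 ≤ y) (hyz : y ≤ z) (hzxy : z ≤ x + y)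
    (hα : 0 ≤ α) (hαγ : 0 ≤ α + γ) (hβγ : 0 ≤ β + γ) :
    0 ≤ α * x + β * y + γ * z := by
  have hdecomp : α * x + β * y + γ * z =
      α * (x + y - z) + (α + γ) * (z - y) + (β + γ) * y := by ring
  rw [hdecomp]
  have hxyz : 0 ≤ x + y - z := sub_nonneg.2 hzxy
  have hzy : 0 ≤ z - y := sub_nonneg.2 hyz
  exact add_nonneg (add_nonneg (mul_nonneg hα hxyz) (mul_nonneg hαγ hzy)) (mul_nonneg hβγ hy)

theorem stmt_19_general (m1 m2 m3 c p1 p2 p3 p4 q1 q2 q3 q4 : ℝ)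
    (hm2 : 0 ≤ m2) (h1 : m2 ≤ m3) (h2 : m3 ≤ m1 + m2) (hc : c ≥ m3)
    (h3 : p1 + p2 + p3 + p4 ≥ q1 + q2 + q3 + q4)
    (h4 : p2 + p3 + p4 ≥ q4)
    (h6 : p1 + p4 ≥ q1 + q4)
    (h7 : 2 * p2 + p3 + p4 ≥ q3 + q4) :
    (p1 + p2 + p3 + p4 - (q1 + q2 + q3 + q4)) * c +
      (p2 + p3 + p4 - q4) * m1 + (-p2 + q3) * m2 + (-p3 + q2) * m3 ≥ 0 := by
  have hshift : 0 ≤ (p1 + p2 + p3 + p4 - (q1 + q2 + q3 + q4)) * (c - m3) :=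
    mul_nonneg (sub_nonneg.2 h3) (sub_nonneg.2 hc)
  have hcone : 0 ≤ (p2 + p3 + p4 - q4) * m1 + (q3 - p2) * m2
      + (p1 + p2 + p4 - (q1 + q3 + q4)) * m3 :=
    mul_add_mul_add_mul_nonneg_of_le_of_le_add hm2 h1 h2 (by linarith) (by linarith)
      (by linarith)
  linear_combination hshift + hcone

theorem stmt_19 (m1 m2 m3 c p1 p2 p3 p4 q1 q2 q3 q4 : ℝ)
    (hm1 : 0 ≤ m1) (hm2 : 0 ≤ m2) (hm3 : 0 ≤ m3)
    (h1 : m2 ≤ m3) (h2 : m3 ≤ m1 + m2) (hc : c ≥ m3)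
    (hp1 : 0 ≤ p1) (hp2 : 0 ≤ p2) (hp3 : 0 ≤ p3) (hp4 : 0 ≤ p4)
    (hq1 : 0 ≤ q1) (hq2 : 0 ≤ q2) (hq3 : 0 ≤ q3) (hq4 : 0 ≤ q4)
    (h3 : p1 + p2 + p3 + p4 ≥ q1 + q2 + q3 + q4)
    (h4 : p2 + p3 + p4 ≥ q4)
    (h5 : p2 + p3 ≥ q2 + q3)
    (h6 : p1 + p4 ≥ q1 + q4)
    (h7 : 2 * p2 + p3 + p4 ≥ q3 + q4) :
    (p1 + p2 + p3 + p4 - (q1 + q2 + q3 + q4)) * c +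
      (p2 + p3 + p4 - q4) * m1 + (-p2 + q3) * m2 + (-p3 + q2) * m3 ≥ 0 :=
  stmt_19_general m1 m2 m3 c p1 p2 p3 p4 q1 q2 q3 q4 hm2 h1 h2 hc h3 h4 h6 h7
end
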